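/- If G ≜ H, then for every game K, G : K = H : K, i.e. the ordinal sums G : K and H : K have equal game values. -/

import Mathlib

universe v

namespace SetTheory

/-- Pre-games (removed from Mathlib; restated with the old Mathlib definition). -/
inductive PGame : Type (v + 1)
  | mk : ∀ α β : Type v, (α → PGame) → (β → PGame) → PGame

namespace PGame

def LeftMoves : PGame → Type v
  | mk l _ _ _ => l

def RightMoves : PGame → Type v
  | mk _ r _ _ => r

def moveLeft : ∀ g : PGame, LeftMoves g → PGame
  | mk _ _ L _ => L

def moveRight : ∀ g : PGame, RightMoves g → PGame
  | mk _ _ _ R => R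

/-- The pair `(x ≤ y, y ≤ x)` of Conway's order, by simultaneous recursion. -/
noncomputable def leGe : PGame.{v} → PGame.{v} → Prop × Prop := fun x =>
  PGame.rec (motive := fun _ => PGame.{v} → Prop × Prop)
    (fun _ _ _ _ ihL ihR y =>
      PGame.rec (motive := fun _ => Prop × Prop)
        (fun yl yr yL yR jhL jhR =>
          ((∀ i, ¬ (ihL i (mk yl yr yL yR)).2) ∧ (∀ j, ¬ (jhR j).2),
           (∀ i, ¬ (jhL i).1) ∧ (∀ j, ¬ (ihR j (mk yl yr yL yR)).1)))
        y) x

theorem leGe_mk (xl xr : Type v) (xL : xl → PGame) (xR : xr → PGame)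
    (yl yr : Type v) (yL : yl → PGame) (yR : yr → PGame) :
    leGe (mk xl xr xL xR) (mk yl yr yL yR) =
      ((∀ i, ¬ (leGe (xL i) (mk yl yr yL yR)).2) ∧
        (∀ j, ¬ (leGe (mk xl xr xL xR) (yR j)).2),
       (∀ i, ¬ (leGe (mk xl xr xL xR) (yL i)).1) ∧
        (∀ j, ¬ (leGe (xR j) (mk yl yr yL yR)).1)) := rfl

theorem leGe_symm (x y : PGame.{v}) :
    ((leGe x y).2 ↔ (leGe y x).1) ∧ ((leGe x y).1 ↔ (leGe y x).2) := by
  induction x generalizing y with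
  | mk xl xr xL xR ihxL ihxR =>
  induction y with
  | mk yl yr yL yR ihyL ihyR =>
  rw [leGe_mk, leGe_mk]
  dsimp only
  exact ⟨and_congr (forall_congr' fun i => not_congr (ihyL i).2)
      (forall_congr' fun j => not_congr (ihxR j _).2),
    and_congr (forall_congr' fun i => not_congr (ihxL i _).1)
      (forall_congr' fun j => not_congr (ihyR j).1)⟩

noncomputable instance : LE PGame := ⟨fun x y => (leGe x y).1⟩

theorem pgLeIff {x y : PGame.{v}} :
    x ≤ y ↔ (∀ i, ¬ y ≤ x.moveLeft i) ∧ (∀ j, ¬ y.moveRight j ≤ x) := by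
  cases x with
  | mk xl xr xL xR =>
  cases y with
  | mk yl yr yL yR =>
  show (leGe _ _).1 ↔ _
  rw [leGe_mk]
  exact and_congr (forall_congr' fun i => not_congr (leGe_symm _ _).1)
    (forall_congr' fun j => not_congr (leGe_symm _ _).1)

theorem pgLeRefl (x : PGame.{v}) : x ≤ x := by
  induction x with
  | mk xl xr xL xR ihL ihR =>
    rw [pgLeIff]
    refine ⟨fun i h => ?_, fun j h => ?_⟩
    · rw [pgLeIff] at h
      exact h.1 i (ihL i)
    · rw [pgLeIff] at h
      exact h.2 j (ihR j)

theorem pgLeTransAux (x y z : PGame.{v}) :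
    (x ≤ y → y ≤ z → x ≤ z) ∧ (y ≤ z → z ≤ x → y ≤ x) ∧ (z ≤ x → x ≤ y → z ≤ y) := by
  induction x generalizing y z with
  | mk xl xr xL xR ihxL ihxR =>
  induction y generalizing z with
  | mk yl yr yL yR ihyL ihyR =>
  induction z with
  | mk zl zr zL zR ihzL ihzR =>
  refine ⟨fun hxy hyz => ?_, fun hyz hzx => ?_, fun hzx hxy => ?_⟩
  · rw [pgLeIff]
    refine ⟨fun i h => ?_, fun j h => ?_⟩
    · exact (pgLeIff.1 hxy).1 i ((ihxL i _ _).2.1 hyz h)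
    · exact (pgLeIff.1 hyz).2 j ((ihzR j).2.2 h hxy)
  · rw [pgLeIff]
    refine ⟨fun i h => ?_, fun j h => ?_⟩
    · exact (pgLeIff.1 hyz).1 i ((ihyL i _).2.2 hzx h)
    · exact (pgLeIff.1 hzx).2 j ((ihxR j _ _).1 h hyz)
  · rw [pgLeIff]
    refine ⟨fun i h => ?_, fun j h => ?_⟩
    · exact (pgLeIff.1 hzx).1 i ((ihzL i).1 hxy h)
    · exact (pgLeIff.1 hxy).2 j ((ihyR j _).2.1 h hzx)

theorem pgLeTrans {x y z : PGame.{v}} (h1 : x ≤ y) (h2 : y ≤ z) : x ≤ z :=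
  (pgLeTransAux x y z).1 h1 h2

/-- Equivalence of pre-games: `x ≤ y ∧ y ≤ x`. -/
def Equiv (x y : PGame.{v}) : Prop := x ≤ y ∧ y ≤ x

instance : HasEquiv PGame := ⟨Equiv⟩

instance setoid : Setoid PGame :=
  ⟨Equiv, ⟨fun x => ⟨pgLeRefl x, pgLeRefl x⟩, fun h => ⟨h.2, h.1⟩,
    fun h1 h2 => ⟨pgLeTrans h1.1 h2.1, pgLeTrans h2.2 h1.2⟩⟩⟩

instance : Zero PGame := ⟨⟨PEmpty, PEmpty, PEmpty.elim, PEmpty.elim⟩⟩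

instance : One PGame := ⟨⟨PUnit, PEmpty, fun _ => 0, PEmpty.elim⟩⟩

def neg : PGame → PGame
  | ⟨l, r, L, R⟩ => ⟨r, l, fun i => neg (R i), fun i => neg (L i)⟩

instance : Neg PGame := ⟨neg⟩

noncomputable def add (x y : PGame.{v}) : PGame.{v} := by
  induction x generalizing y with | mk xl xr _ _ IHxl IHxr => _
  induction y with | mk yl yr yL yR IHyl IHyr => _
  have y := mk yl yr yL yR
  refine ⟨xl ⊕ yl, xr ⊕ yr, Sum.rec ?_ ?_, Sum.rec ?_ ?_⟩
  · exact fun i => IHxl i y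
  · exact fun i => IHyl i
  · exact fun i => IHxr i y
  · exact fun i => IHyr i

noncomputable instance : Add PGame := ⟨add⟩

/-- `powHalf n` is `1 / 2 ^ n`. -/
def powHalf : ℕ → PGame
  | 0 => 1
  | n + 1 => ⟨PUnit, PUnit, fun _ => 0, fun _ => powHalf n⟩

end PGame

/-- Games: pre-games modulo equivalence. -/
abbrev Game := Quotient PGame.setoid

namespace Game

noncomputable instance : Zero Game := ⟨⟦0⟧⟩

noncomputable instance : Add Game := ⟨fun a b => ⟦a.out + b.out⟧⟩

noncomputable instance : Neg Game := ⟨fun a => ⟦-a.out⟧⟩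

/-- The integer multiples `zsmulRec` of the additive group of games. -/
noncomputable instance : SMul ℤ Game := ⟨zsmulRec nsmulRec⟩

end Game

end SetTheory

open SetTheory PGame

universe u

/-- Ordinal sum `G : H`: players may move in the base `G` (ending all play in the
subordinate) or in the subordinate `H`. -/
def ordinalSum (G : PGame.{u}) : PGame.{u} → PGame.{u}
  | ⟨yl, yr, yL, yR⟩ =>
    ⟨G.LeftMoves ⊕ yl, G.RightMoves ⊕ yr,
     Sum.elim G.moveLeft fun j => ordinalSum G (yL j),
     Sum.elim G.moveRight fun j => ordinalSum G (yR j)⟩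

/-- `G ≜ H`: equivalence modulo domination.  Every Left option of `G` is `≤` some Left
option of `H`, every Left option of `H` is `≤` some Left option of `G`, every Right option
of `G` is `≥` some Right option of `H`, and every Right option of `H` is `≥` some Right
option of `G`. -/
def EquivDom (G H : PGame) : Prop :=
  (∀ i, ∃ j, G.moveLeft i ≤ H.moveLeft j) ∧
  (∀ j, ∃ i, H.moveLeft j ≤ G.moveLeft i) ∧
  (∀ i, ∃ j, H.moveRight j ≤ G.moveRight i) ∧
  (∀ j, ∃ i, G.moveRight i ≤ H.moveRight j)

/-- The ball `⟨a | b⟩`: the game with exactly one Left option `a` and exactly one Right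
option `b`. -/
def ball (a b : PGame.{u}) : PGame.{u} :=
  ⟨PUnit, PUnit, fun _ => a, fun _ => b⟩

/-- The canonical form of a natural number: `0 ≅ ⟨ | ⟩` and `n+1 ≅ ⟨n | ⟩`. -/
def canonNat : ℕ → PGame
  | 0 => 0
  | n + 1 => ⟨PUnit, PEmpty, fun _ => canonNat n, PEmpty.elim⟩

/-- The canonical form of an integer: for `n ≥ 0` it is `canonNat n`, and the canonical
form of a negative integer is the negative of the canonical form of its absolute value. -/
def canonInt (n : ℤ) : PGame :=
  if 0 ≤ n then canonNat n.toNat else -canonNat (-n).toNat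

/-- The game value of the dyadic rational `a / 2 ^ q`. -/
noncomputable def dyadicVal (a : ℤ) (q : ℕ) : Game :=
  a • (⟦powHalf q⟧ : Game)

theorem lf_of_le_moveLeft {x y : PGame.{u}} {i : y.LeftMoves} (h : x ≤ y.moveLeft i) :
    ¬ y ≤ x := fun h' => (pgLeIff.1 h').1 i h

theorem lf_of_moveRight_le {x y : PGame.{u}} {j : x.RightMoves} (h : x.moveRight j ≤ y) :
    ¬ y ≤ x := fun h' => (pgLeIff.1 h').2 j h

/-- Each Left option of `G : K` is either a Left option of `G`, dominated by one of `H`, or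
`G : K^L`, below `H : K^L` by induction; dually on the Right. -/
theorem ordinalSum_le_ordinalSum {G H : PGame.{u}}
    (hL : ∀ i, ∃ j, G.moveLeft i ≤ H.moveLeft j)
    (hR : ∀ j, ∃ i, G.moveRight i ≤ H.moveRight j) (K : PGame.{u}) :
    ordinalSum G K ≤ ordinalSum H K := by
  induction K with
  | mk kl kr kL kR ihL ihR =>
    refine pgLeIff.2 ⟨?_, ?_⟩
    · rintro (i | k)
      · obtain ⟨j, hj⟩ := hL i
        exact lf_of_le_moveLeft (i := Sum.inl j) hj
      · exact lf_of_le_moveLeft (i := Sum.inr k) (ihL k)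
    · rintro (j | k)
      · obtain ⟨i, hi⟩ := hR j
        exact lf_of_moveRight_le (j := Sum.inl i) hi
      · exact lf_of_moveRight_le (j := Sum.inr k) (ihR k)

/-- If `G ≜ H` then `G : K = H : K` as game values, for every game `K`. -/
theorem equivDom_ordinalSum_equiv (G H : PGame) (h : EquivDom G H) (K : PGame) :
    ordinalSum G K ≈ ordinalSum H K := by
  obtain ⟨hLGH, hLHG, hRHG, hRGH⟩ := h
  exact ⟨ordinalSum_le_ordinalSum hLGH hRGH K, ordinalSum_le_ordinalSum hLHG hRHG K⟩
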